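/- Let m be an odd positive integer, let j be an integer with 0 ≤ j < m, and let p ∈ ℕ. Then x = γ_m^{(p)}(j) is the unique integer satisfying 0 ≤ x < m and 2^p·(x + 1) ≡ j + 1 (mod m). -/
import Mathlib


/-- The map `γ_m : ℤ → ℤ`, `γ_m(j) = (m-1+j)/2` if `j` is even and `(j-1)/2` if `j` is odd. -/
def gammaMap (m j : ℤ) : ℤ :=
  if Even j then (m - 1 + j) / 2 else (j - 1) / 2

lemma gamma_step (m : ℤ) (hm : Odd m) (j : ℤ) (hj0 : 0 ≤ j) (hjm : j < m) :
    0 ≤ gammaMap m j ∧ gammaMap m j < m ∧ 2 * (gammaMap m j + 1) ≡ j + 1 [ZMOD m] := by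
  obtain ⟨k, hk⟩ := hm
  unfold gammaMap
  by_cases h : Even j
  · obtain ⟨l, hl⟩ := h
    rw [if_pos ⟨l, hl⟩]
    have he : m - 1 + j = 2 * (k + l) := by omega
    rw [he, Int.mul_ediv_cancel_left _ (by norm_num)]
    refine ⟨by omega, by omega, ?_⟩
    have heq : 2 * (k + l + 1) = (j + 1) + m := by omega
    rw [heq]
    exact Int.add_modEq_right
  · have ho : Odd j := Int.not_even_iff_odd.mp h
    obtain ⟨l, hl⟩ := ho
    rw [if_neg h]
    have he : j - 1 = 2 * l := by omega
    rw [he, Int.mul_ediv_cancel_left _ (by norm_num)]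
    refine ⟨by omega, by omega, ?_⟩
    have : 2 * (l + 1) = j + 1 := by omega
    rw [this]

lemma gamma_iter (m : ℤ) (hm : Odd m) (j : ℤ) (hj0 : 0 ≤ j) (hjm : j < m) (p : ℕ) :
    0 ≤ (gammaMap m)^[p] j ∧ (gammaMap m)^[p] j < m ∧
      2 ^ p * ((gammaMap m)^[p] j + 1) ≡ j + 1 [ZMOD m] := by
  induction p with
  | zero => exact ⟨hj0, hjm, by simp⟩
  | succ p ih =>
    obtain ⟨h0, h1, h2⟩ := ih
    obtain ⟨g0, g1, g2⟩ := gamma_step m hm _ h0 h1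
    rw [Function.iterate_succ_apply']
    refine ⟨g0, g1, ?_⟩
    calc 2 ^ (p + 1) * (gammaMap m ((gammaMap m)^[p] j) + 1)
        = 2 ^ p * (2 * (gammaMap m ((gammaMap m)^[p] j) + 1)) := by ring
      _ ≡ 2 ^ p * ((gammaMap m)^[p] j + 1) [ZMOD m] := g2.mul_left _
      _ ≡ j + 1 [ZMOD m] := h2

/-- For `m` odd positive, `0 ≤ j < m` and `p : ℕ`, the iterate `γ_m^(p)(j)` is the unique
integer `x` with `0 ≤ x < m` and `2^p (x+1) ≡ j+1 (mod m)`. -/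
theorem stmt_7 (m : ℤ) (hm : Odd m) (hm' : 0 < m) (j : ℤ) (hj0 : 0 ≤ j) (hjm : j < m)
    (p : ℕ) :
    (0 ≤ (gammaMap m)^[p] j ∧ (gammaMap m)^[p] j < m ∧
      2 ^ p * ((gammaMap m)^[p] j + 1) ≡ j + 1 [ZMOD m]) ∧
    ∀ x : ℤ, 0 ≤ x → x < m → 2 ^ p * (x + 1) ≡ j + 1 [ZMOD m] →
      x = (gammaMap m)^[p] j := by
  obtain ⟨h0, h1, h2⟩ := gamma_iter m hm j hj0 hjm p
  refine ⟨⟨h0, h1, h2⟩, fun x hx0 hx1 hx2 => ?_⟩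
  have hkey : x + 1 ≡ (gammaMap m)^[p] j + 1 [ZMOD m] := by
    have h := hx2.trans h2.symm
    have hg : Int.gcd m (2 ^ p) = 1 := by
      have hc : Nat.Coprime m.natAbs 2 := Nat.coprime_two_right.mpr (Int.natAbs_odd.mpr hm)
      have := Nat.Coprime.pow_right p hc
      simpa [Int.gcd, Int.natAbs_pow] using this
    have := h.cancel_left_div_gcd hm' (c := 2 ^ p) (a := x + 1) (b := (gammaMap m)^[p] j + 1)
    rwa [hg, Nat.cast_one, Int.ediv_one] at this
  have := (Int.ModEq.add_right_cancel' 1 hkey)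
  have hx : x % m = ((gammaMap m)^[p] j) % m := this
  rwa [Int.emod_eq_of_lt hx0 hx1, Int.emod_eq_of_lt h0 h1] at hx
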